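/- arXiv:2505.01550 — 4 statements merged into one kernel-verified Lean document; each statement's English description precedes it below -/
import Mathlib

section
/- (Symmetry) For all integers n ≥ 1, c ≥ 1, and 0 ≤ k ≤ (c−1)·n + c·C(n,2), the colored Mahonian numbers satisfy i_c(n,k) = i_c(n, (c−1)·n + c·C(n,2) − k). -/
/-!
Appending a last entry of value `v` and color `f` to a colored permutation of size `n` adds
`lastCode v f = (n - v) + f + c·[f ≠ 0]·v` to `inv_c`, and `(v, f) ↦ lastCode v f` is a bijection
onto `{0, …, c(n+1) - 1}`. Iterating, colored permutations of size `n` correspond to points of the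
box `∏_{j<n} {0, …, c(j+1) - 1}` with `inv_c` becoming the coordinate sum. Reflecting every
coordinate of the box sends sum `k` to `∑_j (c(j+1) - 1) - k = (c-1)n + c·C(n,2) - k`.
-/

open Finset

/-- The inversion number of a permutation of `Fin n`:
`inv(π) = #{(i,j) : i < j, π(i) > π(j)}`. -/
def invNum {n : ℕ} (π : Equiv.Perm (Fin n)) : ℕ :=
  ((Finset.univ : Finset (Fin n × Fin n)).filter
    (fun p => p.1 < p.2 ∧ π p.2 < π p.1)).card

/-- The colored inversion statistic on a colored permutation `σ = (π, f)`:
`inv_c(σ) = inv(π) + ∑ f(j) + c·#{(i,j) : i < j, π(i) < π(j), f(j) ≠ 0}`. -/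
def invC (c : ℕ) {n : ℕ} (σ : Equiv.Perm (Fin n) × (Fin n → Fin c)) : ℕ :=
  invNum σ.1 + (∑ j, (σ.2 j : ℕ)) +
    c * ((Finset.univ : Finset (Fin n × Fin n)).filter
      (fun p => p.1 < p.2 ∧ σ.1 p.1 < σ.1 p.2 ∧ (σ.2 p.2 : ℕ) ≠ 0)).card

/-- The colored Mahonian number `i_c(n,k)`: the number of colored permutations
of size `n` with exactly `k` colored inversions. -/
noncomputable def mahonianC (c n k : ℕ) : ℕ :=
  Nat.card {σ : Equiv.Perm (Fin n) × (Fin n → Fin c) // invC c σ = k}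

section BoxSymmetry

variable {ι : Type*} [Fintype ι] {m : ι → ℕ}

theorem sum_val_rev_add_sum_val (x : ∀ i, Fin (m i)) :
    ∑ i, ((x i).rev : ℕ) + ∑ i, (x i : ℕ) = ∑ i, (m i - 1) := by
  rw [← sum_add_distrib]
  refine sum_congr rfl fun i _ => ?_
  have := (x i).is_lt
  rw [Fin.val_rev]
  omega

theorem card_sum_eq_card_sum_tsub {k : ℕ} (hk : k ≤ ∑ i, (m i - 1)) :
    Nat.card {x : ∀ i, Fin (m i) // ∑ i, (x i : ℕ) = k} =
      Nat.card {x : ∀ i, Fin (m i) // ∑ i, (x i : ℕ) = ∑ i, (m i - 1) - k} :=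
  Nat.card_congr <| (Equiv.piCongrRight fun _ => Fin.revPerm).subtypeEquiv fun x => by
    show _ ↔ ∑ i, ((x i).rev : ℕ) = _
    have := sum_val_rev_add_sum_val x
    omega

end BoxSymmetry

theorem sum_fin_mul_succ_tsub_one (c n : ℕ) :
    ∑ j : Fin n, (c * (j + 1) - 1) = (c - 1) * n + c * n.choose 2 := by
  induction n with
  | zero => simp
  | succ n ih =>
    simp only [Fin.sum_univ_castSucc, Fin.val_castSucc, Fin.val_last]
    rw [ih, Nat.choose_succ_succ', Nat.choose_one_right]
    rcases c with _ | c
    · simp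
    · simp only [Nat.add_sub_cancel]
      rw [show (c + 1) * (n + 1) = (c * (n + 1) + n) + 1 by ring, Nat.add_sub_cancel]
      ring

theorem Fin.card_filter_lt_prod_succ {n : ℕ} (P : Fin (n + 1) → Fin (n + 1) → Prop)
    [∀ i j, Decidable (P i j)] :
    #{p : Fin (n + 1) × Fin (n + 1) | p.1 < p.2 ∧ P p.1 p.2} =
      #{p : Fin n × Fin n | p.1 < p.2 ∧ P p.1.castSucc p.2.castSucc} +
        #{i : Fin n | P i.castSucc (Fin.last n)} := by
  simp only [card_filter, Fintype.sum_prod_type, Fin.sum_univ_castSucc,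
    Fin.castSucc_lt_castSucc_iff, Fin.castSucc_lt_last, true_and, lt_self_iff_false,
    false_and, if_false, add_zero, sum_add_distrib]
  have h : ∀ x : Fin n, ¬ Fin.last n < x.castSucc := fun x => not_lt.mpr (Fin.le_last _)
  simp [h]

theorem Fin.card_filter_castSucc_lt {n : ℕ} (v : Fin (n + 1)) :
    #{y : Fin n | y.castSucc < v} = v := by
  simp only [Fin.lt_def, Fin.val_castSucc, Fin.card_filter_val_lt]
  exact min_eq_right (Nat.lt_succ_iff.mp v.is_lt)

theorem Fin.card_filter_le_castSucc {n : ℕ} (v : Fin (n + 1)) :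
    #{y : Fin n | v ≤ y.castSucc} = n - v := by
  have := card_filter_add_card_filter_not (s := univ) (fun y : Fin n => y.castSucc < v)
  simp only [not_lt, Fin.card_filter_castSucc_lt, card_univ, Fintype.card_fin] at this
  omega

namespace Equiv.Perm

noncomputable def insertLast {n : ℕ} (v : Fin (n + 1)) (e : Perm (Fin n)) : Perm (Fin (n + 1)) :=
  Equiv.ofBijective (Fin.snoc (α := fun _ => Fin (n + 1)) (v.succAbove ∘ e) v) <|
    Finite.injective_iff_bijective.mp <|
      Fin.snoc_injective_of_injective (Fin.succAbove_right_injective.comp e.injective)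
        (by simp)

variable {n : ℕ} (v : Fin (n + 1)) (e : Perm (Fin n))

@[simp] theorem insertLast_castSucc (i : Fin n) :
    insertLast v e i.castSucc = v.succAbove (e i) := by
  simp [insertLast]

@[simp] theorem insertLast_last : insertLast v e (Fin.last n) = v := by
  simp [insertLast]

theorem insertLast_injective : Function.Injective fun p : Fin (n + 1) × Perm (Fin n) =>
    insertLast p.1 p.2 := by
  rintro ⟨v, e⟩ ⟨v', e'⟩ h
  have hv : v = v' := by simpa using congr($h (Fin.last n))
  subst hv
  have he : e = e' := Equiv.ext fun i => by simpa using congr($h i.castSucc)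
  rw [he]

noncomputable def insertLastEquiv (n : ℕ) : Fin (n + 1) × Perm (Fin n) ≃ Perm (Fin (n + 1)) :=
  Equiv.ofBijective _ <| (Fintype.bijective_iff_injective_and_card _).mpr
    ⟨insertLast_injective, by simp [Fintype.card_perm, Nat.factorial_succ]⟩

theorem invNum_insertLast : invNum (insertLast v e) = invNum e + (n - v) := by
  unfold invNum
  rw [Fin.card_filter_lt_prod_succ (fun i j => insertLast v e j < insertLast v e i)]
  simp only [insertLast_castSucc, insertLast_last, Fin.succAbove_lt_succAbove_iff,
    Fin.lt_succAbove_iff_le_castSucc]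
  congr 1
  rw [← Fin.card_filter_le_castSucc v]
  exact card_equiv e (by simp)

end Equiv.Perm

section Insertion

open Equiv.Perm

variable {n c : ℕ} (v : Fin (n + 1)) (e : Equiv.Perm (Fin n)) (g : Fin n → Fin c) (f : Fin c)

theorem card_coloredNoninversions_insertLast_snoc :
    #{p : Fin (n + 1) × Fin (n + 1) | p.1 < p.2 ∧ insertLast v e p.1 < insertLast v e p.2 ∧
        ((Fin.snoc g f : Fin (n + 1) → Fin c) p.2 : ℕ) ≠ 0} =
      #{p : Fin n × Fin n | p.1 < p.2 ∧ e p.1 < e p.2 ∧ (g p.2 : ℕ) ≠ 0} +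
        if (f : ℕ) = 0 then 0 else (v : ℕ) := by
  rw [Fin.card_filter_lt_prod_succ (fun i j => insertLast v e i < insertLast v e j ∧
    ((Fin.snoc g f : Fin (n + 1) → Fin c) j : ℕ) ≠ 0)]
  simp only [insertLast_castSucc, insertLast_last, Fin.succAbove_lt_succAbove_iff,
    Fin.succAbove_lt_iff_castSucc_lt, Fin.snoc_castSucc, Fin.snoc_last]
  congr 1
  split_ifs with hf
  · simp [hf]
  · simp only [ne_eq, hf, not_false_eq_true, and_true]
    rw [← Fin.card_filter_castSucc_lt v]
    exact card_equiv e (by simp)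

def lastCode : ℕ := (n - v) + f + c * if (f : ℕ) = 0 then 0 else (v : ℕ)

theorem invC_insertLast_snoc :
    invC c (insertLast v e, Fin.snoc g f) = invC c (e, g) + lastCode v f := by
  simp only [invC, invNum_insertLast, card_coloredNoninversions_insertLast_snoc, lastCode,
    Fin.sum_univ_castSucc, Fin.snoc_castSucc, Fin.snoc_last]
  ring

variable {v f}

theorem lastCode_of_val_eq_zero (hf : (f : ℕ) = 0) : lastCode v f = n - v := by
  simp [lastCode, hf]

theorem lastCode_of_val_ne_zero (hf : (f : ℕ) ≠ 0) :
    lastCode v f = n + 1 + ((f - 1) + (c - 1) * v) := by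
  obtain ⟨d, rfl⟩ : ∃ d, c = d + 1 := ⟨c - 1, by have := f.pos; omega⟩
  have := v.is_le
  simp only [lastCode, hf, if_false, Nat.add_sub_cancel]
  rw [add_mul, one_mul]
  omega

variable (v f)

theorem lastCode_lt : lastCode v f < c * (n + 1) := by
  have hc := f.pos
  by_cases hf : (f : ℕ) = 0
  · rw [lastCode_of_val_eq_zero hf]
    have := Nat.le_mul_of_pos_left (n + 1) hc
    omega
  · rw [lastCode_of_val_ne_zero hf]
    have := Nat.mul_le_mul_left (c - 1) v.is_le
    have := f.is_lt
    obtain ⟨d, rfl⟩ : ∃ d, c = d + 1 := ⟨c - 1, by omega⟩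
    simp only [Nat.add_sub_cancel] at *
    rw [show (d + 1) * (n + 1) = d * n + d + n + 1 by ring]
    omega

theorem lastCode_injective :
    Function.Injective fun p : Fin (n + 1) × Fin c => lastCode p.1 p.2 := by
  rintro ⟨v, f⟩ ⟨v', f'⟩ h
  simp only at h
  have := v.is_le
  have := v'.is_le
  by_cases hf : (f : ℕ) = 0 <;> by_cases hf' : (f' : ℕ) = 0
  · rw [lastCode_of_val_eq_zero hf, lastCode_of_val_eq_zero hf'] at h
    rw [Fin.ext (by omega : (v : ℕ) = v'), Fin.ext (hf.trans hf'.symm)]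
  · rw [lastCode_of_val_eq_zero hf, lastCode_of_val_ne_zero hf'] at h
    omega
  · rw [lastCode_of_val_ne_zero hf, lastCode_of_val_eq_zero hf'] at h
    omega
  · rw [lastCode_of_val_ne_zero hf, lastCode_of_val_ne_zero hf'] at h
    -- `v` and `f - 1` are the quotient and remainder of `(f - 1) + (c - 1) * v` by `c - 1`
    have hc : 0 < c - 1 := by have := f.is_lt; omega
    obtain ⟨hv, hr⟩ := (Nat.div_mod_unique hc).mpr ⟨rfl, (by omega : (f : ℕ) - 1 < c - 1)⟩
    obtain ⟨hv', hr'⟩ := (Nat.div_mod_unique hc).mpr ⟨rfl, (by omega : (f' : ℕ) - 1 < c - 1)⟩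
    rw [show (f : ℕ) - 1 + (c - 1) * v = f' - 1 + (c - 1) * v' by omega] at hv hr
    rw [Fin.ext (hv.symm.trans hv'), Fin.ext (by omega : (f : ℕ) = f')]

noncomputable def lastCodeEquiv (n c : ℕ) : Fin (n + 1) × Fin c ≃ Fin (c * (n + 1)) :=
  Equiv.ofBijective (fun p => ⟨lastCode p.1 p.2, lastCode_lt p.1 p.2⟩) <|
    (Fintype.bijective_iff_injective_and_card _).mpr
      ⟨fun _ _ h => lastCode_injective (Fin.val_eq_of_eq h), by simp [mul_comm]⟩

end Insertion

noncomputable def coloredPermSnocEquiv (n c : ℕ) :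
    (Equiv.Perm (Fin n) × (Fin n → Fin c)) × (Fin (n + 1) × Fin c) ≃
      Equiv.Perm (Fin (n + 1)) × (Fin (n + 1) → Fin c) :=
  (Equiv.prodProdProdComm _ _ _ _).trans <|
    ((Equiv.prodComm _ _).trans (Equiv.Perm.insertLastEquiv n)).prodCongr
      ((Equiv.prodComm _ _).trans (Fin.snocEquiv fun _ => Fin c))

theorem coloredPermSnocEquiv_apply {n c : ℕ} (e : Equiv.Perm (Fin n)) (g : Fin n → Fin c)
    (v : Fin (n + 1)) (f : Fin c) :
    coloredPermSnocEquiv n c ((e, g), (v, f)) = (Equiv.Perm.insertLast v e, Fin.snoc g f) :=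
  rfl

noncomputable def coloredCode (c : ℕ) :
    (n : ℕ) → (Equiv.Perm (Fin n) × (Fin n → Fin c)) ≃ ∀ j : Fin n, Fin (c * (j + 1))
  | 0 => (Equiv.prodUnique _ _).trans (Equiv.ofUnique _ _)
  | n + 1 => (coloredPermSnocEquiv n c).symm.trans <|
      ((coloredCode c n).prodCongr (lastCodeEquiv n c)).trans <|
        (Equiv.prodComm _ _).trans (Fin.snocEquiv fun j => Fin (c * (j + 1)))

theorem coloredCode_coloredPermSnocEquiv {c n : ℕ} (σ : Equiv.Perm (Fin n) × (Fin n → Fin c))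
    (p : Fin (n + 1) × Fin c) :
    coloredCode c (n + 1) (coloredPermSnocEquiv n c (σ, p)) =
      Fin.snoc (α := fun j => Fin (c * (j + 1))) (coloredCode c n σ) (lastCodeEquiv n c p) := by
  simp only [coloredCode, Equiv.trans_apply, Equiv.symm_apply_apply, Equiv.prodCongr_apply,
    Prod.map_apply, Equiv.prodComm_apply, Prod.swap_prod_mk]
  rfl

theorem invC_eq_sum_coloredCode (c : ℕ) {n : ℕ} (σ : Equiv.Perm (Fin n) × (Fin n → Fin c)) :
    invC c σ = ∑ j, (coloredCode c n σ j : ℕ) := by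
  induction n with
  | zero => simp [invC, invNum]
  | succ n ih =>
    obtain ⟨⟨⟨e, g⟩, v, f⟩, rfl⟩ := (coloredPermSnocEquiv n c).surjective σ
    rw [coloredCode_coloredPermSnocEquiv, Fin.sum_univ_castSucc, coloredPermSnocEquiv_apply,
      invC_insertLast_snoc, ih]
    simp [lastCodeEquiv]

theorem mahonianC_eq_card_sum_eq (c n k : ℕ) :
    mahonianC c n k = Nat.card {x : ∀ j : Fin n, Fin (c * (j + 1)) // ∑ j, (x j : ℕ) = k} :=
  Nat.card_congr <| (coloredCode c n).subtypeEquiv fun σ => by rw [invC_eq_sum_coloredCode]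

theorem mahonianC_symm_general (c n k : ℕ) (hk : k ≤ (c - 1) * n + c * n.choose 2) :
    mahonianC c n k = mahonianC c n ((c - 1) * n + c * n.choose 2 - k) := by
  rw [← sum_fin_mul_succ_tsub_one] at hk ⊢
  rw [mahonianC_eq_card_sum_eq, mahonianC_eq_card_sum_eq]
  exact card_sum_eq_card_sum_tsub hk

/-- Symmetry of the colored Mahonian numbers. -/
theorem mahonianC_symm (c n k : ℕ) (hc : 1 ≤ c) (hn : 1 ≤ n)
    (hk : k ≤ (c - 1) * n + c * n.choose 2) :
    mahonianC c n k = mahonianC c n ((c - 1) * n + c * n.choose 2 - k) :=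
  mahonianC_symm_general c n k hk
end

section
/- (Recurrence relation) For all integers n ≥ 2, c ≥ 1, and k ≥ 1, the colored Mahonian numbers satisfy i_c(n,k) + i_c(n−1, k−cn) = i_c(n, k−1) + i_c(n−1, k), where i_c(n−1, k−cn) is interpreted as 0 when k < cn. -/
open Finset

/-! ### Auxiliary development -/

section Aux

/-- Insertion of a new value `v` at the last position. -/
def insFun {n : ℕ} (v : Fin (n+1)) (π : Equiv.Perm (Fin n)) : Fin (n+1) → Fin (n+1) :=
  Fin.lastCases v (fun i => v.succAbove (π i))

lemma insFun_inj {n : ℕ} (v : Fin (n+1)) (π : Equiv.Perm (Fin n)) :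
    Function.Injective (insFun v π) := by
  intro x y h
  induction x using Fin.lastCases with
  | last =>
    induction y using Fin.lastCases with
    | last => rfl
    | cast j => simp [insFun] at h
  | cast i =>
    induction y using Fin.lastCases with
    | last => simp [insFun] at h
    | cast j =>
      simp only [insFun, Fin.lastCases_castSucc] at h
      have := π.injective (Fin.succAbove_right_injective h)
      rw [this]

noncomputable def ins {n : ℕ} (v : Fin (n+1)) (π : Equiv.Perm (Fin n)) :
    Equiv.Perm (Fin (n+1)) :=
  Equiv.ofBijective (insFun v π)
    ((Fintype.bijective_iff_injective_and_card _).mpr ⟨insFun_inj v π, rfl⟩)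

@[simp] lemma ins_last {n : ℕ} (v : Fin (n+1)) (π : Equiv.Perm (Fin n)) :
    ins v π (Fin.last n) = v := by simp [ins, insFun]

@[simp] lemma ins_castSucc {n : ℕ} (v : Fin (n+1)) (π : Equiv.Perm (Fin n)) (i : Fin n) :
    ins v π i.castSucc = v.succAbove (π i) := by simp [ins, insFun]

lemma sum_ite_le (v n : ℕ) : (∑ y ∈ Finset.range n, if v ≤ y then 1 else 0) = n - v := by
  induction n with
  | zero => simp
  | succ n ih => rw [Finset.sum_range_succ, ih]; split <;> omega

lemma sum_ite_lt (v n : ℕ) : (∑ y ∈ Finset.range n, if y < v then 1 else 0) = min v n := by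
  induction n with
  | zero => simp
  | succ n ih => rw [Finset.sum_range_succ, ih]; split <;> omega

lemma sum_fin_ite_le {n : ℕ} (v : Fin (n+1)) :
    (∑ y : Fin n, if v ≤ y.castSucc then 1 else 0) = n - (v:ℕ) := by
  simp only [Fin.le_def, Fin.coe_castSucc]
  rw [Fin.sum_univ_eq_sum_range (fun m => if (v:ℕ) ≤ m then 1 else 0) n, sum_ite_le]

lemma sum_fin_ite_lt {n : ℕ} (v : Fin (n+1)) :
    (∑ y : Fin n, if y.castSucc < v then 1 else 0) = min (v:ℕ) n := by
  simp only [Fin.lt_def, Fin.coe_castSucc]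
  rw [Fin.sum_univ_eq_sum_range (fun m => if m < (v:ℕ) then 1 else 0) n, sum_ite_lt]

lemma invNum_ins {n : ℕ} (v : Fin (n+1)) (π : Equiv.Perm (Fin n)) :
    invNum (ins v π) = invNum π + (n - (v:ℕ)) := by
  unfold invNum
  rw [Finset.card_filter, Finset.card_filter, Fintype.sum_prod_type, Fintype.sum_prod_type,
    Fin.sum_univ_castSucc
      (f := fun i => ∑ j : Fin (n+1), if i < j ∧ ins v π j < ins v π i then 1 else 0)]
  simp only [Fin.sum_univ_castSucc (f := fun j => if _ < j ∧ ins v π j < _ then 1 else 0)]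
  simp only [ins_castSucc, ins_last, Fin.castSucc_lt_castSucc_iff,
    Fin.succAbove_lt_succAbove_iff, Fin.castSucc_lt_last, true_and,
    Fin.lt_succAbove_iff_le_castSucc, Fin.succAbove_lt_iff_castSucc_lt, lt_self_iff_false,
    false_and, if_false, Finset.sum_const_zero, add_zero]
  have h1 : ∀ x : Fin n, ¬ (Fin.last n < x.castSucc) := fun x => (Fin.castSucc_lt_last x).asymm
  simp only [h1, false_and, if_false, Finset.sum_const_zero, add_zero, Finset.sum_add_distrib]
  congr 1
  rw [Equiv.sum_comp π (fun y => if v ≤ y.castSucc then 1 else 0), sum_fin_ite_le]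

lemma colorSum_ins {n c : ℕ} (a : Fin c) (f : Fin n → Fin c) :
    (∑ j : Fin (n+1), ((Fin.lastCases a f : ∀ _ : Fin (n+1), Fin c) j : ℕ))
      = (∑ j, (f j : ℕ)) + (a : ℕ) := by
  rw [Fin.sum_univ_castSucc]
  simp

lemma coinv_ins {n c : ℕ} (v : Fin (n+1)) (π : Equiv.Perm (Fin n)) (a : Fin c)
    (f : Fin n → Fin c) :
    ((Finset.univ : Finset (Fin (n+1) × Fin (n+1))).filter
      (fun p => p.1 < p.2 ∧ ins v π p.1 < ins v π p.2 ∧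
        ((Fin.lastCases a f : ∀ _ : Fin (n+1), Fin c) p.2 : ℕ) ≠ 0)).card
    = ((Finset.univ : Finset (Fin n × Fin n)).filter
        (fun p => p.1 < p.2 ∧ π p.1 < π p.2 ∧ (f p.2 : ℕ) ≠ 0)).card
      + (if (a:ℕ) ≠ 0 then (v:ℕ) else 0) := by
  rw [Finset.card_filter, Finset.card_filter, Fintype.sum_prod_type, Fintype.sum_prod_type,
    Fin.sum_univ_castSucc (f := fun i => ∑ j : Fin (n+1),
      if i < j ∧ ins v π i < ins v π j ∧
        ((Fin.lastCases a f : ∀ _ : Fin (n+1), Fin c) j : ℕ) ≠ 0 then 1 else 0)]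
  simp only [Fin.sum_univ_castSucc (f := fun j => if _ < j ∧ _ < ins v π j ∧
    ((Fin.lastCases a f : ∀ _ : Fin (n+1), Fin c) j : ℕ) ≠ 0 then 1 else 0)]
  have h1 : ∀ x : Fin n, ¬ (Fin.last n < x.castSucc) := fun x => (Fin.castSucc_lt_last x).asymm
  simp only [ins_castSucc, ins_last, Fin.castSucc_lt_castSucc_iff,
    Fin.succAbove_lt_succAbove_iff, Fin.castSucc_lt_last, true_and,
    Fin.lastCases_castSucc, Fin.lastCases_last,
    Fin.lt_succAbove_iff_le_castSucc, Fin.succAbove_lt_iff_castSucc_lt, lt_self_iff_false,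
    h1, false_and, if_false, Finset.sum_const_zero, add_zero, Finset.sum_add_distrib]
  congr 1
  by_cases ha : (a:ℕ) ≠ 0
  · simp only [ne_eq, ha, not_false_eq_true, and_true, if_true]
    rw [Equiv.sum_comp π (fun y => if y.castSucc < v then 1 else 0), sum_fin_ite_lt]
    exact min_eq_left (by omega)
  · have ha' : (a:ℕ) = 0 := by omega
    simp [ha']

/-- The amount contributed by the inserted pair `(v, a)`. -/
def delta (c n : ℕ) (q : Fin (n+1) × Fin c) : ℕ :=
  (n - (q.1:ℕ)) + (q.2:ℕ) + (if (q.2:ℕ) ≠ 0 then c * (q.1:ℕ) else 0)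

lemma invC_ins {n c : ℕ} (v : Fin (n+1)) (π : Equiv.Perm (Fin n)) (a : Fin c)
    (f : Fin n → Fin c) :
    invC c (ins v π, (Fin.lastCases a f : ∀ _ : Fin (n+1), Fin c)) =
      invC c (π, f) + delta c n (v, a) := by
  unfold invC delta
  simp only
  rw [invNum_ins, colorSum_ins, coinv_ins]
  split_ifs <;> ring

lemma base_unique {b x y u w : ℕ} (hx : x < b) (hy : y < b)
    (h : x + b * u = y + b * w) : x = y ∧ u = w := by
  have h1 : (x + b * u) % b = x := by rw [Nat.add_mul_mod_self_left, Nat.mod_eq_of_lt hx]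
  have h2 : (y + b * w) % b = y := by rw [Nat.add_mul_mod_self_left, Nat.mod_eq_of_lt hy]
  have hxy : x = y := by rw [← h1, ← h2, h]
  refine ⟨hxy, ?_⟩
  have : b * u = b * w := by omega
  exact Nat.eq_of_mul_eq_mul_left (by omega) this

lemma delta_lt {c n : ℕ} (q : Fin (n+1) × Fin c) : delta c n q < c * (n+1) := by
  obtain ⟨v, a⟩ := q
  have hv : (v:ℕ) ≤ n := by omega
  have ha : (a:ℕ) < c := a.isLt
  unfold delta
  dsimp only
  by_cases h0 : (a:ℕ) ≠ 0
  · rw [if_pos h0]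
    obtain ⟨b, rfl⟩ : ∃ b, c = b + 1 := ⟨c - 1, by omega⟩
    have h1 : (b+1) * (v:ℕ) = b * v + v := by ring
    have h2 : (b+1) * (n+1) = b * n + b + n + 1 := by ring
    have h3 : b * (v:ℕ) ≤ b * n := Nat.mul_le_mul_left b hv
    omega
  · rw [if_neg h0]
    have : 1 * (n+1) ≤ c * (n+1) := Nat.mul_le_mul_right (n+1) (by omega)
    omega

lemma delta_inj {c n : ℕ} : Function.Injective (delta c n) := by
  rintro ⟨v, a⟩ ⟨v', a'⟩ h
  have hv : (v:ℕ) ≤ n := by omega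
  have hv' : (v':ℕ) ≤ n := by omega
  have ha : (a:ℕ) < c := a.isLt
  have ha' : (a':ℕ) < c := a'.isLt
  unfold delta at h
  simp only at h
  have goal : (v:ℕ) = (v':ℕ) ∧ (a:ℕ) = (a':ℕ) := by
    by_cases h0 : (a:ℕ) ≠ 0 <;> by_cases h0' : (a':ℕ) ≠ 0
    · rw [if_pos h0, if_pos h0'] at h
      obtain ⟨b, rfl⟩ : ∃ b, c = b + 1 := ⟨c - 1, by omega⟩
      have h1 : (b+1) * (v:ℕ) = b * v + v := by ring
      have h1' : (b+1) * (v':ℕ) = b * v' + v' := by ring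
      have h2 : ((a:ℕ) - 1) + b * (v:ℕ) = ((a':ℕ) - 1) + b * (v':ℕ) := by omega
      have h3 := base_unique (b := b) (by omega) (by omega) h2
      omega
    · rw [if_pos h0, if_neg h0'] at h
      obtain ⟨b, rfl⟩ : ∃ b, c = b + 1 := ⟨c - 1, by omega⟩
      have h1 : (b+1) * (v:ℕ) = b * v + v := by ring
      have h4 : (v:ℕ) ≤ b * v + v := by omega
      exfalso; omega
    · rw [if_neg h0, if_pos h0'] at h
      obtain ⟨b, rfl⟩ : ∃ b, c = b + 1 := ⟨c - 1, by omega⟩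
      have h1' : (b+1) * (v':ℕ) = b * v' + v' := by ring
      have h4 : (v':ℕ) ≤ b * v' + v' := by omega
      exfalso; omega
    · rw [if_neg h0, if_neg h0'] at h
      omega
  exact Prod.ext (Fin.ext goal.1) (Fin.ext goal.2)

/-- The full bijection inserting `(v, a)` at the last position. -/
noncomputable def phi {n c : ℕ}
    (x : (Equiv.Perm (Fin n) × (Fin n → Fin c)) × (Fin (n+1) × Fin c)) :
    Equiv.Perm (Fin (n+1)) × (Fin (n+1) → Fin c) :=
  (ins x.2.1 x.1.1, (Fin.lastCases x.2.2 x.1.2 : ∀ _ : Fin (n+1), Fin c))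

lemma phi_inj {n c : ℕ} : Function.Injective (phi (n := n) (c := c)) := by
  rintro ⟨⟨π, f⟩, ⟨v, a⟩⟩ ⟨⟨π', f'⟩, ⟨v', a'⟩⟩ h
  rw [Prod.mk.injEq] at h
  obtain ⟨h1, h2⟩ := h
  have hv : v = v' := by
    have := congrArg (fun e : Equiv.Perm (Fin (n+1)) => e (Fin.last n)) h1
    simpa [phi] using this
  subst hv
  have hπ : π = π' := Equiv.ext fun i => by
    have := congrArg (fun e : Equiv.Perm (Fin (n+1)) => e i.castSucc) h1
    simp only [phi, ins_castSucc] at this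
    exact Fin.succAbove_right_injective this
  have ha : a = a' := by
    have := congrFun h2 (Fin.last n)
    simpa [phi] using this
  have hf : f = f' := by
    funext i
    have := congrFun h2 i.castSucc
    simpa [phi] using this
  simp [hπ, ha, hf]

lemma phi_bij {n c : ℕ} : Function.Bijective (phi (n := n) (c := c)) := by
  refine (Fintype.bijective_iff_injective_and_card _).mpr ⟨phi_inj, ?_⟩
  simp only [Fintype.card_prod, Fintype.card_perm, Fintype.card_fun, Fintype.card_fin]
  rw [Nat.factorial_succ, pow_succ]
  ring

lemma invC_phi {n c : ℕ}
    (x : (Equiv.Perm (Fin n) × (Fin n → Fin c)) × (Fin (n+1) × Fin c)) :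
    invC c (phi x) = invC c x.1 + delta c n x.2 := by
  obtain ⟨⟨π, f⟩, ⟨v, a⟩⟩ := x
  exact invC_ins v π a f

lemma mahonianC_card (c n k : ℕ) :
    mahonianC c n k = ((Finset.univ : Finset (Equiv.Perm (Fin n) × (Fin n → Fin c))).filter
      (fun σ => invC c σ = k)).card := by
  rw [mahonianC, Nat.card_eq_fintype_card, Fintype.card_subtype]

lemma mahonianC_succ (c n k : ℕ) :
    mahonianC c (n+1) k
      = ∑ d ∈ Finset.range (c * (n+1)), if d ≤ k then mahonianC c n (k - d) else 0 := by
  classical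
  have e : {x : (Equiv.Perm (Fin n) × (Fin n → Fin c)) × (Fin (n+1) × Fin c) //
      invC c (phi x) = k} ≃ {σ : Equiv.Perm (Fin (n+1)) × (Fin (n+1) → Fin c) //
      invC c σ = k} :=
    Equiv.subtypeEquiv (Equiv.ofBijective phi phi_bij) (fun x => Iff.rfl)
  rw [mahonianC, Nat.card_eq_fintype_card, ← Fintype.card_congr e, Fintype.card_subtype,
    Finset.card_filter]
  have hsum : ∀ x : (Equiv.Perm (Fin n) × (Fin n → Fin c)) × (Fin (n+1) × Fin c),
      (if invC c (phi x) = k then 1 else 0)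
        = (if invC c x.1 + delta c n x.2 = k then 1 else 0) := by
    intro x; rw [invC_phi]
  rw [Finset.sum_congr rfl (fun x _ => hsum x), Fintype.sum_prod_type_right]
  have inner : ∀ q : Fin (n+1) × Fin c,
      (∑ σ : Equiv.Perm (Fin n) × (Fin n → Fin c),
        if invC c σ + delta c n q = k then 1 else 0)
      = (if delta c n q ≤ k then mahonianC c n (k - delta c n q) else 0) := by
    intro q
    by_cases hd : delta c n q ≤ k
    · rw [if_pos hd, mahonianC_card, Finset.card_filter]
      refine Finset.sum_congr rfl fun σ _ => ?_
      exact if_congr (by omega) rfl rfl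
    · rw [if_neg hd]
      refine Finset.sum_eq_zero fun σ _ => ?_
      rw [if_neg]; omega
  rw [Finset.sum_congr rfl (fun q _ => inner q)]
  have himg : (Finset.univ : Finset (Fin (n+1) × Fin c)).image (delta c n)
      = Finset.range (c * (n+1)) := by
    apply Finset.eq_of_subset_of_card_le
    · intro d hd
      rw [Finset.mem_image] at hd
      obtain ⟨q, _, rfl⟩ := hd
      exact Finset.mem_range.mpr (delta_lt q)
    · rw [Finset.card_image_of_injective _ delta_inj]
      simp [mul_comm]
  rw [← himg, Finset.sum_image (fun x _ y _ h => delta_inj h)]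

end Aux

/-- Recurrence relation:
`i_c(n,k) + i_c(n−1, k−cn) = i_c(n, k−1) + i_c(n−1, k)`,
where `i_c(n−1, k−cn)` is interpreted as `0` when `k < cn`. -/
theorem mahonianC_recurrence (c n k : ℕ) (hc : 1 ≤ c) (hn : 2 ≤ n) (hk : 1 ≤ k) :
    mahonianC c n k + (if c * n ≤ k then mahonianC c (n - 1) (k - c * n) else 0) =
      mahonianC c n (k - 1) + mahonianC c (n - 1) k := by
  obtain ⟨m, rfl⟩ : ∃ m, n = m + 1 := ⟨n - 1, by omega⟩
  simp only [Nat.add_sub_cancel]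
  set G : ℕ → ℕ := fun d => if d ≤ k then mahonianC c m (k - d) else 0 with hG
  set N := c * (m + 1) with hN
  have hGk : mahonianC c (m+1) k = ∑ d ∈ Finset.range N, G d := mahonianC_succ c m k
  have hGk1 : mahonianC c (m+1) (k-1) = ∑ d ∈ Finset.range N, G (d+1) := by
    rw [mahonianC_succ c m (k-1)]
    refine Finset.sum_congr rfl fun d _ => ?_
    rw [hG]
    simp only
    rw [show k - 1 - d = k - (d+1) by omega]
    exact if_congr (by omega) rfl rfl
  have key : (∑ d ∈ Finset.range N, G (d+1)) + G 0
      = (∑ d ∈ Finset.range N, G d) + G N := by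
    rw [← Finset.sum_range_succ', Finset.sum_range_succ]
  have hG0 : G 0 = mahonianC c m k := by simp [hG]
  have hGN : G N = if N ≤ k then mahonianC c m (k - N) else 0 := rfl
  rw [hGk, hGk1, ← hGN]
  omega
end

section
/- For all integers c ≥ 1 and n ≥ 0, the total number of colored inversions is given by the closed formula 2·I_{c,n} = c^n · n! · (c·C(n+1, 2) − n), where C(n+1,2) = n(n+1)/2. -/
open Finset

/-- `I_{c,n}`: the total number of colored inversions over all colored
permutations of size `n`. -/
def totalInvC (c n : ℕ) : ℕ :=
  ∑ σ : Equiv.Perm (Fin n) × (Fin n → Fin c), invC c σ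

lemma two_mul_card_perm_lt {n : ℕ} (i j : Fin n) (h : i ≠ j) :
    2 * ((univ : Finset (Equiv.Perm (Fin n))).filter (fun π => π i < π j)).card
      = n.factorial := by
  have hbij : ((univ : Finset (Equiv.Perm (Fin n))).filter (fun π => π i < π j)).card
      = ((univ : Finset (Equiv.Perm (Fin n))).filter (fun π => π j < π i)).card := by
    apply Finset.card_bij' (fun π _ => π * Equiv.swap i j) (fun π _ => π * Equiv.swap i j)
    · intro π hπ
      simp only [mem_filter, mem_univ, true_and] at hπ ⊢
      simpa using hπ
    · intro π hπ
      simp only [mem_filter, mem_univ, true_and] at hπ ⊢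
      simpa using hπ
    · intro π _
      simp [mul_assoc]
    · intro π _
      simp [mul_assoc]
  have hne : ∀ π : Equiv.Perm (Fin n), π i ≠ π j := fun π hp => h (π.injective hp)
  have hsplit := Finset.card_filter_add_card_filter_not
    (s := (univ : Finset (Equiv.Perm (Fin n)))) (p := fun π => π i < π j)
  have hfilter : ((univ : Finset (Equiv.Perm (Fin n))).filter (fun π => ¬ π i < π j))
      = (univ : Finset (Equiv.Perm (Fin n))).filter (fun π => π j < π i) := by
    apply Finset.filter_congr
    intro π _
    simp only [not_lt, eq_iff_iff]
    exact ⟨fun hle => lt_of_le_of_ne hle (Ne.symm (hne π)), le_of_lt⟩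
  rw [hfilter, ← hbij] at hsplit
  rw [two_mul, hsplit, Finset.card_univ, Fintype.card_perm, Fintype.card_fin]

lemma sum_fun_apply {n c : ℕ} (j : Fin n) (g : Fin c → ℕ) :
    ∑ f : Fin n → Fin c, g (f j) = c ^ (n - 1) * ∑ x : Fin c, g x := by
  rw [← Equiv.sum_comp (Equiv.funSplitAt j (Fin c)).symm (fun f => g (f j))]
  have : ∀ p : Fin c × ({ k : Fin n // k ≠ j } → Fin c),
      ((Equiv.funSplitAt j (Fin c)).symm p) j = p.1 := by
    intro p; simp [Equiv.funSplitAt, Equiv.piSplitAt]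
  simp_rw [this]
  rw [Fintype.sum_prod_type_right]
  simp only []
  rw [Finset.sum_const, Finset.card_univ, smul_eq_mul, Fintype.card_fun]
  simp [Fintype.card_subtype_compl]

lemma two_mul_sum_invNum (n : ℕ) :
    2 * ∑ π : Equiv.Perm (Fin n), invNum π
      = n.factorial * ((univ : Finset (Fin n × Fin n)).filter (fun p => p.1 < p.2)).card := by
  unfold invNum
  simp_rw [Finset.card_filter, Finset.mul_sum]
  rw [Finset.sum_comm]
  refine Finset.sum_congr rfl fun p _ => ?_
  by_cases hp : p.1 < p.2
  · simp only [hp, true_and, if_true, mul_one]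
    rw [← Finset.mul_sum, ← Finset.card_filter]
    exact two_mul_card_perm_lt p.2 p.1 hp.ne'
  · simp [hp]

lemma card_lt_pairs (n : ℕ) :
    2 * ((univ : Finset (Fin n × Fin n)).filter (fun p => p.1 < p.2)).card + n = n * n := by
  have h : ((univ : Finset (Fin n × Fin n)).filter (fun p => p.1 < p.2)).card
      = ∑ j : Fin n, (j : ℕ) := by
    rw [Finset.card_filter, Fintype.sum_prod_type_right]
    refine Finset.sum_congr rfl fun j _ => ?_
    rw [← Finset.card_filter]
    have hI : (univ : Finset (Fin n)).filter (fun x => (x, j).1 < (x, j).2) = Finset.Iio j := by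
      ext x; simp
    rw [hI, Fin.card_Iio]
  rw [h, Fin.sum_univ_eq_sum_range (fun i => i) n]
  have h2 := Finset.sum_range_id_mul_two n
  have hx : n * n = n * (n - 1) + n := by
    cases n with
    | zero => rfl
    | succ m => simp [Nat.succ_sub_one]; ring
  rw [hx, ← h2]; ring

lemma sum_fin_ite_ne (c : ℕ) :
    (∑ x : Fin c, if (x : ℕ) ≠ 0 then 1 else 0) = c - 1 := by
  rw [Fin.sum_univ_eq_sum_range (fun i => if i ≠ 0 then 1 else 0) c]
  induction c with
  | zero => simp
  | succ m ih =>
    rw [Finset.sum_range_succ, ih]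
    by_cases hm : m = 0 <;> simp [hm] <;> omega

lemma two_mul_sum_fin_val (c : ℕ) :
    2 * ∑ x : Fin c, (x : ℕ) = c * (c - 1) := by
  rw [Fin.sum_univ_eq_sum_range (fun i => i) c, mul_comm, Finset.sum_range_id_mul_two]

lemma two_mul_sum_A (c n : ℕ) :
    2 * ∑ σ : Equiv.Perm (Fin n) × (Fin n → Fin c), invNum σ.1
      = c ^ n * (n.factorial
          * ((univ : Finset (Fin n × Fin n)).filter (fun p => p.1 < p.2)).card) := by
  rw [Fintype.sum_prod_type]
  dsimp only
  simp_rw [Finset.sum_const, Finset.card_univ, Fintype.card_fun, Fintype.card_fin, smul_eq_mul]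
  rw [← Finset.mul_sum,
    show 2 * (c ^ n * ∑ π : Equiv.Perm (Fin n), invNum π)
      = c ^ n * (2 * ∑ π : Equiv.Perm (Fin n), invNum π) by ring,
    two_mul_sum_invNum]

lemma two_mul_sum_B (c n : ℕ) :
    2 * ∑ σ : Equiv.Perm (Fin n) × (Fin n → Fin c), (∑ j, ((σ.2 j : ℕ)))
      = n.factorial * (n * (c ^ (n - 1) * (c * (c - 1)))) := by
  rw [Fintype.sum_prod_type]
  dsimp only
  rw [Finset.sum_const, Finset.card_univ, Fintype.card_perm, Fintype.card_fin, smul_eq_mul,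
    show 2 * (n.factorial * ∑ f : Fin n → Fin c, ∑ j, ((f j : ℕ)))
      = n.factorial * (2 * ∑ f : Fin n → Fin c, ∑ j, ((f j : ℕ))) by ring]
  congr 1
  rw [Finset.sum_comm]
  have h1 : ∀ j : Fin n, ∑ f : Fin n → Fin c, ((f j : ℕ))
      = c ^ (n - 1) * ∑ x : Fin c, (x : ℕ) := fun j => sum_fun_apply j (fun x => (x : ℕ))
  simp_rw [h1]
  rw [Finset.sum_const, Finset.card_univ, Fintype.card_fin, smul_eq_mul,
    show 2 * (n * (c ^ (n - 1) * ∑ x : Fin c, (x : ℕ)))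
      = n * (c ^ (n - 1) * (2 * ∑ x : Fin c, (x : ℕ))) by ring,
    two_mul_sum_fin_val]

lemma two_mul_sum_C (c n : ℕ) :
    2 * ∑ σ : Equiv.Perm (Fin n) × (Fin n → Fin c),
        ((Finset.univ : Finset (Fin n × Fin n)).filter
          (fun p => p.1 < p.2 ∧ σ.1 p.1 < σ.1 p.2 ∧ (σ.2 p.2 : ℕ) ≠ 0)).card
      = ((univ : Finset (Fin n × Fin n)).filter (fun p => p.1 < p.2)).card
          * (n.factorial * (c ^ (n - 1) * (c - 1))) := by
  simp_rw [Finset.card_filter]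
  rw [Finset.sum_comm, Finset.mul_sum, Finset.sum_mul]
  simp_rw [ite_mul, one_mul, zero_mul]
  refine Finset.sum_congr rfl fun p _ => ?_
  by_cases hp : p.1 < p.2
  · simp only [hp, true_and, if_true]
    rw [Fintype.sum_prod_type]
    dsimp only
    have inner : ∀ π : Equiv.Perm (Fin n),
        (∑ f : Fin n → Fin c, if (π p.1 < π p.2 ∧ (f p.2 : ℕ) ≠ 0) then 1 else 0)
          = if π p.1 < π p.2 then c ^ (n - 1) * (c - 1) else 0 := by
      intro π
      by_cases hπ : π p.1 < π p.2
      · simp only [hπ, true_and, if_true]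
        rw [sum_fun_apply p.2 (fun x : Fin c => if (x : ℕ) ≠ 0 then 1 else 0), sum_fin_ite_ne]
      · simp [hπ]
    simp_rw [inner]
    rw [Finset.sum_ite, Finset.sum_const, Finset.sum_const_zero, add_zero, smul_eq_mul,
      ← mul_assoc, two_mul_card_perm_lt p.1 p.2 hp.ne]
  · simp [hp]

/-- Closed formula: `2·I_{c,n} = c^n · n! · (c·C(n+1,2) − n)`. -/
theorem totalInvC_closed_formula (c n : ℕ) (hc : 1 ≤ c) :
    2 * totalInvC c n = c ^ n * n.factorial * (c * (n + 1).choose 2 - n) := by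
  obtain ⟨d, rfl⟩ : ∃ d, c = d + 1 := ⟨c - 1, by omega⟩
  rcases Nat.eq_zero_or_pos n with rfl | hn
  · simp [totalInvC, invC, invNum]
  obtain ⟨m, rfl⟩ : ∃ m, n = m + 1 := ⟨n - 1, by omega⟩
  have hch : 2 * (m + 1 + 1).choose 2 = (m + 1) * (m + 2) := by
    rw [Nat.choose_two_right]
    simp only [Nat.add_sub_cancel]
    have he : Even ((m + 1 + 1) * (m + 1)) := by
      simpa [mul_comm] using Nat.even_mul_succ_self (m + 1)
    rw [Nat.mul_div_cancel' he.two_dvd]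
    ring
  have hge : (m + 1) ≤ (d + 1) * (m + 1 + 1).choose 2 := by
    have h1 : m + 1 ≤ (m + 1 + 1).choose 2 := by
      have h2 : 2 * (m + 1) ≤ 2 * (m + 1 + 1).choose 2 := by
        rw [hch]
        calc 2 * (m + 1) = (m + 1) * 2 := mul_comm _ _
          _ ≤ (m + 1) * (m + 2) := Nat.mul_le_mul_left _ (by omega)
      exact Nat.le_of_mul_le_mul_left h2 (by norm_num)
    calc m + 1 ≤ (m + 1 + 1).choose 2 := h1
      _ = 1 * ((m + 1 + 1).choose 2) := (one_mul _).symm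
      _ ≤ (d + 1) * ((m + 1 + 1).choose 2) := Nat.mul_le_mul_right _ (by omega)
  obtain ⟨k, hk⟩ : ∃ k, (d + 1) * (m + 1 + 1).choose 2 = (m + 1) + k :=
    ⟨_, (Nat.add_sub_cancel' hge).symm⟩
  rw [hk, Nat.add_sub_cancel_left]
  have h2k : 2 * (m + 1) + 2 * k = (d + 1) * ((m + 1) * (m + 2)) := by
    calc 2 * (m + 1) + 2 * k = 2 * ((m + 1) + k) := by ring
      _ = 2 * ((d + 1) * (m + 1 + 1).choose 2) := by rw [hk]
      _ = (d + 1) * (2 * (m + 1 + 1).choose 2) := by ring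
      _ = (d + 1) * ((m + 1) * (m + 2)) := by rw [hch]
  have hKn := card_lt_pairs (m + 1)
  set K := ((univ : Finset (Fin (m+1) × Fin (m+1))).filter (fun p => p.1 < p.2)).card with hKdef
  have key : K * (d + 1) + (m + 1) * d = k := by
    have hKn' : (2 * (K : ℤ) + (m + 1)) = (m + 1) * (m + 1) := by exact_mod_cast hKn
    have h2k' : (2 * ((m : ℤ) + 1) + 2 * k) = (d + 1) * ((m + 1) * (m + 2)) := by
      exact_mod_cast h2k
    have h2 : (2 * ((K : ℤ) * (d + 1) + (m + 1) * d)) = 2 * k := by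
      linear_combination ((d : ℤ) + 1) * hKn' - h2k'
    have h3 : 2 * (K * (d + 1) + (m + 1) * d) = 2 * k := by exact_mod_cast h2
    exact Nat.eq_of_mul_eq_mul_left (by norm_num) h3
  rw [← key]
  have hsplit : totalInvC (d + 1) (m + 1)
      = (∑ σ : Equiv.Perm (Fin (m+1)) × (Fin (m+1) → Fin (d+1)), invNum σ.1)
        + (∑ σ : Equiv.Perm (Fin (m+1)) × (Fin (m+1) → Fin (d+1)), ∑ j, ((σ.2 j : ℕ)))
        + (d + 1) * (∑ σ : Equiv.Perm (Fin (m+1)) × (Fin (m+1) → Fin (d+1)),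
            ((Finset.univ : Finset (Fin (m+1) × Fin (m+1))).filter
              (fun p => p.1 < p.2 ∧ σ.1 p.1 < σ.1 p.2 ∧ (σ.2 p.2 : ℕ) ≠ 0)).card) := by
    unfold totalInvC invC
    rw [Finset.sum_add_distrib, Finset.sum_add_distrib, ← Finset.mul_sum]
  calc 2 * totalInvC (d + 1) (m + 1)
      = 2 * (∑ σ : Equiv.Perm (Fin (m+1)) × (Fin (m+1) → Fin (d+1)), invNum σ.1)
        + 2 * (∑ σ : Equiv.Perm (Fin (m+1)) × (Fin (m+1) → Fin (d+1)), ∑ j, ((σ.2 j : ℕ)))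
        + (d + 1) * (2 * (∑ σ : Equiv.Perm (Fin (m+1)) × (Fin (m+1) → Fin (d+1)),
            ((Finset.univ : Finset (Fin (m+1) × Fin (m+1))).filter
              (fun p => p.1 < p.2 ∧ σ.1 p.1 < σ.1 p.2 ∧ (σ.2 p.2 : ℕ) ≠ 0)).card)) := by
        rw [hsplit]; ring
    _ = (d + 1) ^ (m + 1) * ((m + 1).factorial * K)
        + (m + 1).factorial * ((m + 1) * ((d + 1) ^ (m + 1 - 1) * ((d + 1) * (d + 1 - 1))))
        + (d + 1) * (K * ((m + 1).factorial * ((d + 1) ^ (m + 1 - 1) * (d + 1 - 1)))) := by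
        rw [two_mul_sum_A, two_mul_sum_B, two_mul_sum_C]
    _ = (d + 1) ^ (m + 1) * (m + 1).factorial * (K * (d + 1) + (m + 1) * d) := by
        simp only [Nat.add_sub_cancel]
        ring
end

section
/- For every integer c ≥ 1, the exponential generating function of the numbers r_n^{(c)} of colored involutions is ∑_{n≥0} r_n^{(c)} · x^n/n! = exp( ( ((−1)^c + 3)·x + c·x^2 ) / 2 ), as an identity of formal power series over the rational numbers. -/
open Finset

/-- A colored involution: a colored permutation `σ = (π, f)` with `π ∘ π = id`
and `f(i) + f(π(i)) ≡ 0 (mod c)` for every `i`. -/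
def IsColoredInvolution {c n : ℕ} (σ : Equiv.Perm (Fin n) × (Fin n → Fin c)) : Prop :=
  σ.1 * σ.1 = 1 ∧ ∀ i, ((σ.2 i : ℕ) + (σ.2 (σ.1 i) : ℕ)) % c = 0

/-- `r_n^{(c)}`: the number of colored involutions of size `n`. -/
noncomputable def involutionCountC (c n : ℕ) : ℕ :=
  Nat.card {σ : Equiv.Perm (Fin n) × (Fin n → Fin c) // IsColoredInvolution σ}

/-- The formal exponential `exp(F) = ∑_{m ≥ 0} F^m / m!` of a power series `F`
over `ℚ` with zero constant term: since `F` has zero constant term, the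
coefficient of `x^n` in `F^m` vanishes for `m > n`, so the `n`-th coefficient
of `exp F` is the finite sum `∑_{m=0}^{n} (coeff n of F^m) / m!`. -/
noncomputable def expPS (F : PowerSeries ℚ) : PowerSeries ℚ :=
  PowerSeries.mk fun n =>
    ∑ m ∈ Finset.range (n + 1), (PowerSeries.coeff n) (F ^ m) / (m.factorial : ℚ)

/-!
Classify a colored involution of size `n + 2` by what happens to its first point. Either the point
is fixed, and its color `v` must satisfy `v = -v` in `ℤ/c` (one choice for odd `c`, two for even
`c`, i.e. `a = ((-1)^c + 3)/2` choices), or it is paired with one of the other `n + 1` points, its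
color is arbitrary and determines the color of its partner. Hence
`r (n + 2) = a r (n + 1) + (n + 1) c r n` and `r 1 = a r 0`, which says that the exponential
generating function `E` satisfies `E' = (a + c x) E`. By the chain rule `exp (a x + c x² / 2)`
satisfies the same linear differential equation, and both have constant term `1`.
-/

open Function PowerSeries

namespace PowerSeries

theorem eq_of_derivative_eq_mul {R : Type*} [CommRing R] [IsAddTorsionFree R] {f g h : R⟦X⟧}
    (hf : d⁄dX R f = f * h) (hg : d⁄dX R g = g * h) (h0 : constantCoeff f = constantCoeff g) :
    f = g := by
  ext n
  induction n using Nat.strong_induction_on with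
  | _ n ih =>
  cases n with
  | zero => simpa using h0
  | succ n =>
    have hcoeff : coeff n (f * h) = coeff n (g * h) := by
      simp only [coeff_mul]
      refine Finset.sum_congr rfl fun p hp => ?_
      rw [ih p.1 (Finset.Nat.antidiagonal.fst_lt hp)]
    rw [← hf, ← hg, coeff_derivative, coeff_derivative, ← Nat.cast_succ, mul_comm,
      ← nsmul_eq_mul, mul_comm, ← nsmul_eq_mul] at hcoeff
    exact (smul_right_inj n.succ_ne_zero).1 hcoeff

theorem derivative_C_mul_X_add_C_mul_X_sq {R : Type*} [CommRing R] (a b : R) :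
    d⁄dX R (C a * X + C b * X ^ 2) = C a + C (2 * b) * X := by
  simp only [map_add, Derivation.leibniz, derivative_X, smul_eq_mul, mul_one, derivative_C,
    mul_zero, add_zero, Derivation.leibniz_pow, Nat.add_one_sub_one, pow_one, nsmul_eq_mul,
    Nat.cast_ofNat, map_mul, map_ofNat C 2, add_right_inj]
  ring

theorem derivative_mk_div_factorial_of_recurrence {K : Type*} [Field K] [CharZero K]
    {r : ℕ → K} {a b : K} (h1 : r 1 = a * r 0)
    (h : ∀ n, r (n + 2) = a * r (n + 1) + (n + 1) * b * r n) :
    d⁄dX K (mk fun n => r n / n.factorial) =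
      (mk fun n => r n / n.factorial) * (C a + C b * X) := by
  ext n
  rw [coeff_derivative, mul_add (PowerSeries.mk _), map_add, coeff_mul_C, mul_left_comm,
    coeff_C_mul, coeff_mk, coeff_mk]
  cases n with
  | zero => simp [h1, mul_comm]
  | succ n =>
    rw [coeff_succ_mul_X, coeff_mk, h, Nat.factorial_succ, Nat.factorial_succ]
    have hn : (n : K) + 1 + 1 ≠ 0 := by exact_mod_cast (n + 1).succ_ne_zero
    push_cast
    field_simp

end PowerSeries

theorem expPS_eq_subst_exp {F : ℚ⟦X⟧} (hF : constantCoeff F = 0) :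
    expPS F = (exp ℚ).subst F := by
  ext n
  have hsupp : (support fun m => coeff m (exp ℚ) • coeff n (F ^ m)) ⊆ Finset.range (n + 1) :=
    fun m hm => by
      by_contra hmn
      refine hm ?_
      dsimp only
      rw [coeff_of_lt_order n ((Nat.cast_lt.2 (by simpa using hmn)).trans_le
        (le_order_pow_of_constantCoeff_eq_zero m hF)), smul_zero]
  rw [expPS, coeff_mk, coeff_subst' (HasSubst.of_constantCoeff_zero' hF),
    finsum_eq_sum_of_support_subset _ hsupp]
  simp [coeff_exp, div_eq_inv_mul]

theorem derivative_expPS {F : ℚ⟦X⟧} (hF : constantCoeff F = 0) :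
    d⁄dX ℚ (expPS F) = expPS F * d⁄dX ℚ F := by
  rw [expPS_eq_subst_exp hF, derivative_subst (HasSubst.of_constantCoeff_zero' hF),
    derivative_exp]

theorem constantCoeff_expPS (F : ℚ⟦X⟧) : constantCoeff (expPS F) = 1 := by
  rw [← coeff_zero_eq_constantCoeff_apply, expPS, coeff_mk]
  simp

/-- `IsColoredInvolution` is the case `G = Fin c`, where `f i + f (π i) ≡ 0 [MOD c]` reads
`f (π i) = -f i`. -/
@[ext]
structure ColoredInvolution (α G : Type*) [Neg G] where
  invol : α → α
  involutive : Involutive invol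
  color : α → G
  color_invol : ∀ a, color (invol a) = -color a

namespace ColoredInvolution

variable {α β G : Type*}

section Neg

variable [Neg G]

instance [Finite α] [Finite G] : Finite (ColoredInvolution α G) :=
  Finite.of_injective (fun s => (s.invol, s.color)) fun s t h => by
    ext1
    exacts [congrArg Prod.fst h, congrArg Prod.snd h]

instance [IsEmpty α] : Unique (ColoredInvolution α G) where
  default := ⟨id, fun _ => rfl, isEmptyElim, isEmptyElim⟩
  uniq s := by ext a <;> exact isEmptyElim a

@[simps]
def congr (e : α ≃ β) : ColoredInvolution α G ≃ ColoredInvolution β G where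
  toFun s := ⟨e ∘ s.invol ∘ e.symm, fun b => by simp [s.involutive _], s.color ∘ e.symm,
    fun b => by simp [s.color_invol]⟩
  invFun s := ⟨e.symm ∘ s.invol ∘ e, fun a => by simp [s.involutive _], s.color ∘ e,
    fun a => by simp [s.color_invol]⟩
  left_inv s := by ext <;> simp
  right_inv s := by ext <;> simp

noncomputable def restrict (s : ColoredInvolution β G) (e : α ↪ β)
    (hs : ∀ a, ∃ b, s.invol (e a) = e b) : ColoredInvolution α G where
  invol a := (hs a).choose
  involutive a := e.injective <| by rw [← (hs _).choose_spec, ← (hs a).choose_spec, s.involutive]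
  color := s.color ∘ e
  color_invol a := by rw [comp_apply, comp_apply, ← (hs a).choose_spec, s.color_invol]

theorem apply_restrict_invol (s : ColoredInvolution β G) (e : α ↪ β)
    (hs : ∀ a, ∃ b, s.invol (e a) = e b) (a : α) :
    e ((s.restrict e hs).invol a) = s.invol (e a) :=
  (hs a).choose_spec.symm

noncomputable def fiberNoneEquiv :
    {s : ColoredInvolution (Option α) G // s.invol none = none} ≃
      {v : G // -v = v} × ColoredInvolution α G where
  toFun s := (⟨s.1.color none, by simpa [s.2] using (s.1.color_invol none).symm⟩,
    s.1.restrict .some fun a => Option.ne_none_iff_exists'.1 fun h =>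
      Option.some_ne_none a (s.1.involutive.injective (h.trans s.2.symm)))
  invFun p := ⟨⟨Option.map p.2.invol, fun o => by cases o <;> simp [p.2.involutive _],
    fun o => o.elim p.1 p.2.color, fun o => by cases o <;> simp [p.1.2, p.2.color_invol]⟩, rfl⟩
  left_inv s := by
    refine Subtype.ext (ColoredInvolution.ext (funext fun o => ?_) (funext fun o => ?_)) <;>
      rcases o with _ | a
    · exact s.2.symm
    · exact apply_restrict_invol s.1 .some _ a
    · rfl
    · rfl
  right_inv p := by
    ext a
    · rfl
    · exact Option.some_injective _ (apply_restrict_invol _ .some _ a)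
    · rfl

theorem invol_some_none {s : ColoredInvolution (Option (Option α)) G}
    (hs : s.invol none = some none) : s.invol (some none) = none := by
  rw [← hs, s.involutive]

theorem exists_invol_some_some {s : ColoredInvolution (Option (Option α)) G}
    (hs : s.invol none = some none) (a : α) : ∃ b, s.invol (some (some a)) = some (some b) := by
  rcases hx : s.invol (some (some a)) with _ | _ | b
  · exact absurd (s.involutive.injective (hx.trans (invol_some_none hs).symm)) (by simp)
  · exact absurd (s.involutive.injective (hx.trans hs.symm)) (by simp)
  · exact ⟨b, rfl⟩

end Neg

variable [InvolutiveNeg G]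

noncomputable def fiberSomeNoneEquiv :
    {s : ColoredInvolution (Option (Option α)) G // s.invol none = some none} ≃
      G × ColoredInvolution α G where
  toFun s := (s.1.color none, s.1.restrict (.trans .some .some) (exists_invol_some_some s.2))
  invFun p := ⟨⟨fun
      | none => some none
      | some none => none
      | some (some a) => some (some (p.2.invol a)),
    by rintro (_ | _ | a) <;> simp [p.2.involutive _],
    fun
      | none => p.1
      | some none => -p.1
      | some (some a) => p.2.color a,
    by rintro (_ | _ | a) <;> simp [p.2.color_invol]⟩, rfl⟩
  left_inv s := by
    refine Subtype.ext (ColoredInvolution.ext (funext fun o => ?_) (funext fun o => ?_)) <;>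
      rcases o with _ | _ | a
    · exact s.2.symm
    · exact (invol_some_none s.2).symm
    · exact apply_restrict_invol s.1 (.trans .some .some) _ a
    · rfl
    · simpa [s.2] using (s.1.color_invol none).symm
    · rfl
  right_inv p := by
    ext a
    · rfl
    · exact (Embedding.trans .some .some).injective
        (apply_restrict_invol _ (.trans .some .some) _ a)
    · rfl

/-- Relabelling `α` as `Option {x // x ≠ j}` moves the partner `j` of `none` to `some none`. -/
noncomputable def fiberSomeEquiv [DecidableEq α] (j : α) :
    {s : ColoredInvolution (Option α) G // s.invol none = some j} ≃
      G × ColoredInvolution {x // x ≠ j} G :=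
  (Equiv.subtypeEquiv (congr (Equiv.optionCongr (Equiv.optionSubtypeNe j).symm)) fun s => by
    simp [Equiv.symm_apply_eq]).trans fiberSomeNoneEquiv

theorem card_option [Fintype α] [Finite G] :
    Nat.card (ColoredInvolution (Option α) G) =
      Nat.card {v : G // -v = v} * Nat.card (ColoredInvolution α G) +
        ∑ j : α, Nat.card G * Nat.card (ColoredInvolution {x // x ≠ j} G) := by
  classical
  rw [← Nat.card_congr (Equiv.sigmaFiberEquiv fun s : ColoredInvolution (Option α) G =>
      s.invol none), Nat.card_sigma, Fintype.sum_option, Nat.card_congr fiberNoneEquiv,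
    Nat.card_prod]
  simp only [Nat.card_congr (fiberSomeEquiv _), Nat.card_prod]

theorem card_fin_one [Finite G] :
    Nat.card (ColoredInvolution (Fin 1) G) = Nat.card {v : G // -v = v} := by
  simp [Nat.card_congr (congr (G := G) (finSuccEquiv 0)), card_option]

theorem card_fin_add_two [Finite G] (n : ℕ) :
    Nat.card (ColoredInvolution (Fin (n + 2)) G) =
      Nat.card {v : G // -v = v} * Nat.card (ColoredInvolution (Fin (n + 1)) G) +
        (n + 1) * (Nat.card G * Nat.card (ColoredInvolution (Fin n) G)) := by
  have hcard (j : Fin (n + 1)) : Fintype.card {x // x ≠ j} = n := by simp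
  simp only [Nat.card_congr (congr (G := G) (finSuccEquiv (n + 1))), card_option,
    Nat.card_congr (congr (G := G) (Fintype.equivFinOfCardEq (hcard _))), Finset.sum_const,
    Finset.card_univ, Fintype.card_fin, smul_eq_mul]

end ColoredInvolution

theorem Fin.val_add_val_mod_eq_zero_iff {c : ℕ} [NeZero c] (a b : Fin c) :
    ((a : ℕ) + b) % c = 0 ↔ b = -a := by
  rw [← Fin.val_add, Fin.val_eq_zero_iff, add_eq_zero_iff_eq_neg']

theorem Fin.neg_eq_self_iff {c : ℕ} [NeZero c] (v : Fin c) :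
    -v = v ↔ v = 0 ∨ 2 * (v : ℕ) = c := by
  obtain ⟨k, rfl⟩ := Nat.exists_eq_succ_of_ne_zero (NeZero.ne c)
  exact ZMod.neg_eq_self_iff (n := k + 1) v

theorem Fin.card_neg_eq_self (c : ℕ) [NeZero c] :
    Nat.card {v : Fin c // -v = v} = if Even c then 2 else 1 := by
  classical
  have hc := NeZero.ne c
  rw [Nat.card_eq_fintype_card, Fintype.card_subtype]
  split_ifs with he
  · obtain ⟨d, rfl⟩ := he
    refine Finset.card_eq_two.2 ⟨0, ⟨d, by omega⟩, by simp only [ne_eq, Fin.ext_iff, Fin.coe_ofNat_eq_mod, Nat.zero_mod]; omega, ?_⟩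
    ext v
    simp only [Finset.mem_filter, Finset.mem_univ, true_and, Fin.neg_eq_self_iff,
      Finset.mem_insert, Finset.mem_singleton]
    simp only [Fin.ext_iff, Fin.val_zero]
    omega
  · rw [Nat.even_iff] at he
    refine Finset.card_eq_one.2 ⟨0, ?_⟩
    ext v
    simp only [Fin.neg_eq_self_iff, Finset.mem_filter, Finset.mem_univ, true_and,
      Finset.mem_singleton, or_iff_left_iff_imp]
    omega

def isColoredInvolutionEquiv (c n : ℕ) [NeZero c] :
    {σ : Equiv.Perm (Fin n) × (Fin n → Fin c) // IsColoredInvolution σ} ≃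
      ColoredInvolution (Fin n) (Fin c) where
  toFun σ := ⟨σ.1.1, fun i => Equiv.Perm.ext_iff.1 σ.2.1 i, σ.1.2,
    fun i => (Fin.val_add_val_mod_eq_zero_iff _ _).1 (σ.2.2 i)⟩
  invFun s := ⟨(s.involutive.toPerm, s.color), Equiv.ext s.involutive,
    fun i => (Fin.val_add_val_mod_eq_zero_iff _ _).2 (s.color_invol i)⟩
  left_inv _ := Subtype.ext (Prod.ext (Equiv.ext fun _ => rfl) rfl)
  right_inv _ := rfl

theorem involutionCountC_eq_card (c n : ℕ) [NeZero c] :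
    involutionCountC c n = Nat.card (ColoredInvolution (Fin n) (Fin c)) :=
  Nat.card_congr (isColoredInvolutionEquiv c n)

/-- The exponential generating function of the colored involution numbers:
`∑_{n≥0} r_n^{(c)} x^n/n! = exp( (((−1)^c + 3)x + c x²) / 2 )`. -/
theorem involutionCountC_egf (c : ℕ) (hc : 1 ≤ c) :
    PowerSeries.mk (fun n => (involutionCountC c n : ℚ) / (n.factorial : ℚ)) =
      expPS (PowerSeries.C (((-1 : ℚ) ^ c + 3) / 2) * PowerSeries.X +
             PowerSeries.C ((c : ℚ) / 2) * PowerSeries.X ^ 2) := by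
  have : NeZero c := ⟨by omega⟩
  have hF : constantCoeff (C (((-1 : ℚ) ^ c + 3) / 2) * X + C ((c : ℚ) / 2) * X ^ 2) = 0 := by
    simp
  have htorsion : (Nat.card {v : Fin c // -v = v} : ℚ) = ((-1) ^ c + 3) / 2 := by
    rw [Fin.card_neg_eq_self]
    split_ifs with h
    · norm_num [h.neg_one_pow]
    · norm_num [(Nat.not_even_iff_odd.1 h).neg_one_pow]
  refine eq_of_derivative_eq_mul ?_ (derivative_expPS hF)
    (by simp [constantCoeff_expPS, involutionCountC_eq_card])
  rw [derivative_C_mul_X_add_C_mul_X_sq, mul_div_cancel₀ _ two_ne_zero]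
  refine derivative_mk_div_factorial_of_recurrence ?_ fun n => ?_
  · rw [involutionCountC_eq_card, involutionCountC_eq_card, ColoredInvolution.card_fin_one,
      htorsion, Nat.card_unique, Nat.cast_one, mul_one]
  · simp only [involutionCountC_eq_card, ColoredInvolution.card_fin_add_two, Nat.card_fin]
    push_cast
    rw [htorsion]
    ring
end
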